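/- For all radii 0 < r < r′ there exists ε > 0 with the following property: if T is a geodesic triangle on the sphere S_r whose angle θ₁ at a vertex a satisfies θ₁ < ε, and T′ is a geodesic triangle on the larger sphere S_{r′} with the same three side lengths as T, then the angle θ₁′ of T′ at the vertex corresponding to a satisfies θ₁′ < θ₁. -/

import Mathlib

noncomputable section

/-- Points of ℝ³. -/
abbrev E3 := EuclideanSpace ℝ (Fin 3)

/-- Points of the Euclidean plane. -/
abbrev E2 := EuclideanSpace ℝ (Fin 2)

/-- `p` lies on the sphere `S_r` of radius `r` centered at the origin in ℝ³. -/
def onSphere (r : ℝ) (p : E3) : Prop := ‖p‖ = r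

/-- Geodesic (great-circle) distance on the sphere of radius `r`:
`d_r(p,q) = r · arccos(⟪p,q⟫ / r²)`. -/
def sdist (r : ℝ) (p q : E3) : ℝ := r * Real.arccos ((inner ℝ p q : ℝ) / r ^ 2)

/-- The tangent vector at `p` pointing along the minimal geodesic arc from `p`
towards `q` (the component of `q` orthogonal to `p`). -/
def sTangent (p q : E3) : E3 := q - (((inner ℝ q p : ℝ)) / ‖p‖ ^ 2) • p

/-- The spherical angle at vertex `v` between the minimal geodesic arcs `vp` and `vq`,
i.e. the angle between the tangent directions of the two arcs at `v`; it lies in `[0, π]`. -/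
def sAngle (p v q : E3) : ℝ :=
  InnerProductGeometry.angle (sTangent v p) (sTangent v q)

/-- A geodesic triangle on the sphere of radius `r`: three vertices on the sphere,
pairwise neither equal nor antipodal, and not all lying on one great circle
(equivalently, linearly independent in ℝ³). -/
def SphTriangle (r : ℝ) (a b c : E3) : Prop :=
  onSphere r a ∧ onSphere r b ∧ onSphere r c ∧
  a ≠ b ∧ a ≠ c ∧ b ≠ c ∧ a ≠ -b ∧ a ≠ -c ∧ b ≠ -c ∧
  LinearIndependent ℝ ![a, b, c]

/-!
Write the side lengths of a triangle on `S_r` as `r α, r β, r γ`, with `α` opposite the apex `a`,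
so that `α, β, γ` are the angles the sides subtend at the centre. By the spherical law of cosines
the apex angle `A` satisfies `1 - cos A = 2 sin u sin v / (sin β sin γ)` with
`u = (α - β + γ) / 2` and `v = (α + β - γ) / 2`, where `0 < u < γ` and `0 < v < β` by the strict
triangle inequality, which comes from the linear independence of the vertices. On `S_{r'}` the same
side lengths subtend `t α, t β, t γ` with `t = r / r' < 1`, which turns `u, v` into `t u, t v`.
Since `x ↦ sin (t x) / sin x` is strictly increasing on `(0, π)`, `1 - cos A` strictly decreases:
the apex angle shrinks for every triangle, so any `ε` works.
-/

open Real InnerProductGeometry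

section SinRatio

variable {t : ℝ}

lemma sin_mul_mul_cos_lt (ht0 : 0 < t) (ht1 : t < 1) {x : ℝ} (hx0 : 0 < x) (hxπ : x < π) :
    sin (t * x) * cos x < t * cos (t * x) * sin x := by
  let g : ℝ → ℝ := fun x => t * cos (t * x) * sin x - sin (t * x) * cos x
  have hg' : ∀ x, HasDerivAt g ((1 - t ^ 2) * (sin (t * x) * sin x)) x := fun x => by
    have htx := (hasDerivAt_id' x).const_mul t
    exact (((htx.cos.const_mul t).mul (hasDerivAt_sin x)).sub
      (htx.sin.mul (hasDerivAt_cos x))).congr_deriv (by ring)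
  have hg : StrictMonoOn g (Set.Icc 0 π) := by
    refine strictMonoOn_of_deriv_pos (convex_Icc 0 π) (by fun_prop) fun y hy => ?_
    rw [interior_Icc] at hy
    rw [(hg' y).deriv]
    have : 0 < 1 - t ^ 2 := by nlinarith
    have := sin_pos_of_pos_of_lt_pi (mul_pos ht0 hy.1)
      ((mul_lt_of_lt_one_left hy.1 ht1).trans hy.2)
    have := sin_pos_of_pos_of_lt_pi hy.1 hy.2
    positivity
  have := hg ⟨le_rfl, pi_pos.le⟩ ⟨hx0.le, hxπ.le⟩ hx0
  simp only [g, mul_zero, sin_zero, cos_zero] at this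
  linarith

theorem sin_mul_div_sin_strictMonoOn (ht0 : 0 < t) (ht1 : t < 1) :
    StrictMonoOn (fun x => sin (t * x) / sin x) (Set.Ioo 0 π) := by
  refine strictMonoOn_of_deriv_pos (convex_Ioo 0 π)
    (fun x hx => ContinuousAt.continuousWithinAt <| by
      have := (sin_pos_of_pos_of_lt_pi hx.1 hx.2).ne'
      fun_prop (disch := assumption))
    fun x hx => ?_
  rw [interior_Ioo] at hx
  have hsin := sin_pos_of_pos_of_lt_pi hx.1 hx.2
  have hderiv : HasDerivAt (fun x => sin (t * x) / sin x) _ x :=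
    ((hasDerivAt_id' x).const_mul t).sin.div (hasDerivAt_sin x) hsin.ne'
  rw [hderiv.deriv]
  have := sin_mul_mul_cos_lt ht0 ht1 hx.1 hx.2
  exact div_pos (by linarith) (by positivity)

end SinRatio

/-- The spherical law of cosines: the cosine of the angle at the apex of a triangle on the unit
sphere whose two sides at the apex have lengths `β`, `γ` and whose opposite side has length `α`. -/
def apexCos (α β γ : ℝ) : ℝ := (cos α - cos β * cos γ) / (sin β * sin γ)

lemma one_sub_apexCos {α β γ : ℝ} (hβ : sin β ≠ 0) (hγ : sin γ ≠ 0) :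
    1 - apexCos α β γ
      = 2 * sin ((α - β + γ) / 2) * sin ((α + β - γ) / 2) / (sin β * sin γ) := by
  have hcos : cos (β - γ) - cos α = 2 * sin ((α - β + γ) / 2) * sin ((α + β - γ) / 2) := by
    rw [cos_sub_cos, show (β - γ - α) / 2 = -((α - β + γ) / 2) by ring,
      show (β - γ + α) / 2 = (α + β - γ) / 2 by ring, sin_neg]
    ring
  rw [apexCos, ← hcos, cos_sub]
  field_simp
  ring

theorem apexCos_lt_apexCos_mul {t α β γ : ℝ} (ht0 : 0 < t) (ht1 : t < 1)
    (hβ : β < π) (hγ : γ < π)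
    (hα_lt : α < β + γ) (hβ_lt : β < α + γ) (hγ_lt : γ < α + β) :
    apexCos α β γ < apexCos (t * α) (t * β) (t * γ) := by
  set u := (α - β + γ) / 2 with hu
  set v := (α + β - γ) / 2 with hv
  have hu0 : 0 < u := by linarith
  have hv0 : 0 < v := by linarith
  have huγ : u < γ := by linarith
  have hvβ : v < β := by linarith
  have hβ0 : 0 < β := hv0.trans hvβ
  have hγ0 : 0 < γ := hu0.trans huγ
  have hsin : ∀ {x}, 0 < x → x < π → 0 < sin x ∧ 0 < sin (t * x) := fun h0 hπ =>
    ⟨sin_pos_of_pos_of_lt_pi h0 hπ,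
      sin_pos_of_pos_of_lt_pi (mul_pos ht0 h0) ((mul_lt_of_lt_one_left h0 ht1).trans hπ)⟩
  obtain ⟨hsβ, hstβ⟩ := hsin hβ0 hβ
  obtain ⟨hsγ, hstγ⟩ := hsin hγ0 hγ
  obtain ⟨hsu, hstu⟩ := hsin hu0 (huγ.trans hγ)
  obtain ⟨hsv, hstv⟩ := hsin hv0 (hvβ.trans hβ)
  have hfu : sin (t * u) / sin u < sin (t * γ) / sin γ :=
    sin_mul_div_sin_strictMonoOn ht0 ht1 ⟨hu0, huγ.trans hγ⟩ ⟨hγ0, hγ⟩ huγ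
  have hfv : sin (t * v) / sin v < sin (t * β) / sin β :=
    sin_mul_div_sin_strictMonoOn ht0 ht1 ⟨hv0, hvβ.trans hβ⟩ ⟨hβ0, hβ⟩ hvβ
  have hpos : 0 < 1 - apexCos α β γ := by
    rw [one_sub_apexCos hsβ.ne' hsγ.ne']
    positivity
  have hratio : (sin (t * u) / sin u) * (sin (t * v) / sin v)
      / ((sin (t * γ) / sin γ) * (sin (t * β) / sin β)) < 1 :=
    (div_lt_one (by positivity)).2 (mul_lt_mul'' hfu hfv (by positivity) (by positivity))
  have hscale : 1 - apexCos (t * α) (t * β) (t * γ)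
      = (sin (t * u) / sin u) * (sin (t * v) / sin v)
          / ((sin (t * γ) / sin γ) * (sin (t * β) / sin β)) * (1 - apexCos α β γ) := by
    rw [one_sub_apexCos hsβ.ne' hsγ.ne', ← hu, ← hv, one_sub_apexCos hstβ.ne' hstγ.ne',
      show (t * α - t * β + t * γ) / 2 = t * u by ring,
      show (t * α + t * β - t * γ) / 2 = t * v by ring]
    field_simp
  linarith [mul_lt_of_lt_one_left hpos hratio]

section LinearIndependentAngles

variable {V : Type*} [NormedAddCommGroup V] [InnerProductSpace ℝ V] {x y z : V}

lemma LinearIndependent.fin_three_swap₀₁ (h : LinearIndependent ℝ ![x, y, z]) :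
    LinearIndependent ℝ ![y, x, z] := by
  convert h.comp _ (Equiv.swap (0 : Fin 3) 1).injective using 1
  ext i; fin_cases i <;> rfl

lemma LinearIndependent.fin_three_swap₁₂ (h : LinearIndependent ℝ ![x, y, z]) :
    LinearIndependent ℝ ![x, z, y] := by
  convert h.comp _ (Equiv.swap (1 : Fin 3) 2).injective using 1
  ext i; fin_cases i <;> rfl

lemma angle_lt_pi_of_linearIndependent (h : LinearIndependent ℝ ![x, y, z]) :
    angle x y < π := by
  refine (angle_le_pi x y).lt_of_ne fun hπ => ?_
  obtain ⟨-, k, -, rfl⟩ := angle_eq_pi_iff.1 hπ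
  have := Fintype.linearIndependent_iff.1 h ![k, -1, 0] (by simp [Fin.sum_univ_three]) 1
  simp at this

lemma angle_lt_angle_add_angle_of_linearIndependent (h : LinearIndependent ℝ ![x, y, z]) :
    angle x z < angle x y + angle y z := by
  refine (angle_le_angle_add_angle x y z).lt_of_ne fun heq => ?_
  rcases (angle_eq_angle_add_angle_iff (h.ne_zero 1)).1 heq with hπ | hspan
  · obtain ⟨-, k, -, rfl⟩ := angle_eq_pi_iff.1 hπ
    have := Fintype.linearIndependent_iff.1 h ![k, 0, -1] (by simp [Fin.sum_univ_three]) 2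
    simp at this
  · obtain ⟨p, q, hpq⟩ := Submodule.mem_span_pair.1 hspan
    have := Fintype.linearIndependent_iff.1 h ![p, -1, q]
      (by simp [Fin.sum_univ_three, ← hpq, NNReal.smul_def]) 1
    simp at this

theorem apexCos_angle_lt_apexCos_mul_angle {t : ℝ} (ht0 : 0 < t) (ht1 : t < 1)
    (h : LinearIndependent ℝ ![x, y, z]) :
    apexCos (angle y z) (angle x y) (angle x z)
      < apexCos (t * angle y z) (t * angle x y) (t * angle x z) := by
  have hyz := angle_lt_angle_add_angle_of_linearIndependent h.fin_three_swap₀₁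
  have hxy := angle_lt_angle_add_angle_of_linearIndependent h.fin_three_swap₁₂
  have hxz := angle_lt_angle_add_angle_of_linearIndependent h
  rw [angle_comm y x] at hyz
  rw [angle_comm z y] at hxy
  exact apexCos_lt_apexCos_mul ht0 ht1 (angle_lt_pi_of_linearIndependent h)
    (angle_lt_pi_of_linearIndependent h.fin_three_swap₁₂) hyz (by linarith) (by linarith)

end LinearIndependentAngles

lemma sdist_eq_mul_angle {r : ℝ} {p q : E3} (hp : onSphere r p) (hq : onSphere r q) :
    sdist r p q = r * angle p q := by
  rw [sdist, angle, hp, hq, sq]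

lemma inner_sTangent_sTangent {a : E3} (ha : a ≠ 0) (b c : E3) :
    inner ℝ (sTangent a b) (sTangent a c) = inner ℝ b c - inner ℝ a b * inner ℝ a c / ‖a‖ ^ 2 := by
  have ha' : ‖a‖ ≠ 0 := norm_ne_zero_iff.2 ha
  simp only [sTangent, inner_sub_left, inner_sub_right, real_inner_smul_left,
    real_inner_smul_right, real_inner_self_eq_norm_sq, real_inner_comm a]
  field_simp
  ring

lemma norm_sTangent {a : E3} (ha : a ≠ 0) (b : E3) : ‖sTangent a b‖ = ‖b‖ * sin (angle a b) := by
  have ha' : ‖a‖ ≠ 0 := norm_ne_zero_iff.2 ha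
  refine (sq_eq_sq₀ (norm_nonneg _) (mul_nonneg (norm_nonneg _) (sin_angle_nonneg a b))).1 ?_
  rw [← real_inner_self_eq_norm_sq, inner_sTangent_sTangent ha, real_inner_self_eq_norm_sq,
    ← cos_angle_mul_norm_mul_norm a b, mul_pow, sin_sq]
  field_simp

theorem cos_sAngle {a b c : E3} (ha : a ≠ 0) (hb : b ≠ 0) (hc : c ≠ 0) :
    cos (sAngle b a c) = apexCos (angle b c) (angle a b) (angle a c) := by
  have ha' : ‖a‖ ≠ 0 := norm_ne_zero_iff.2 ha
  have hnum : inner ℝ b c - inner ℝ a b * inner ℝ a c / ‖a‖ ^ 2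
      = ‖b‖ * ‖c‖ * (cos (angle b c) - cos (angle a b) * cos (angle a c)) := by
    rw [← cos_angle_mul_norm_mul_norm b c, ← cos_angle_mul_norm_mul_norm a b,
      ← cos_angle_mul_norm_mul_norm a c]
    field_simp
  rw [sAngle, cos_angle, inner_sTangent_sTangent ha, hnum, norm_sTangent ha, norm_sTangent ha,
    apexCos, mul_mul_mul_comm, mul_div_mul_left _ _ (by positivity)]

lemma ne_zero_of_onSphere {r : ℝ} {p : E3} (hr : 0 < r) (hp : onSphere r p) : p ≠ 0 :=
  norm_ne_zero_iff.1 ((show ‖p‖ = r from hp).trans_ne hr.ne')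

/-- **The thin-triangle lemma** (Lemma 5).  For all radii `0 < r < r'` there is an
`ε > 0` such that: if `T = △abc` is a geodesic triangle on the sphere `S_r` whose apex
angle at `a` is less than `ε`, and `T' = △a'b'c'` is a geodesic triangle on the larger
sphere `S_{r'}` with the same three side lengths (sides corresponding to sides of equal
length), then the angle of `T'` at `a'` is strictly smaller than the angle of `T`
at `a`. -/
theorem thin_triangle_apex_angle_shrinks (r r' : ℝ) (hr : 0 < r) (hrr' : r < r') :
    ∃ ε > 0, ∀ a b c a' b' c' : E3,
      SphTriangle r a b c → SphTriangle r' a' b' c' →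
      sdist r b c = sdist r' b' c' →
      sdist r a b = sdist r' a' b' →
      sdist r a c = sdist r' a' c' →
      sAngle b a c < ε →
      sAngle b' a' c' < sAngle b a c := by
  have hr' : 0 < r' := hr.trans hrr'
  refine ⟨1, one_pos, fun a b c a' b' c' hT hT' hbc hab hac _ => ?_⟩
  obtain ⟨ha, hb, hc, -, -, -, -, -, -, hLI⟩ := hT
  obtain ⟨ha', hb', hc', -⟩ := hT'
  have hscale {p q p' q' : E3} (hp : onSphere r p) (hq : onSphere r q) (hp' : onSphere r' p')
      (hq' : onSphere r' q') (h : sdist r p q = sdist r' p' q') :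
      angle p' q' = r / r' * angle p q := by
    rw [sdist_eq_mul_angle hp hq, sdist_eq_mul_angle hp' hq'] at h
    field_simp
    linarith
  have hcos : cos (sAngle b a c) < cos (sAngle b' a' c') := by
    rw [cos_sAngle (ne_zero_of_onSphere hr ha) (ne_zero_of_onSphere hr hb)
        (ne_zero_of_onSphere hr hc),
      cos_sAngle (ne_zero_of_onSphere hr' ha') (ne_zero_of_onSphere hr' hb')
        (ne_zero_of_onSphere hr' hc'),
      hscale hb hc hb' hc' hbc, hscale ha hb ha' hb' hab, hscale ha hc ha' hc' hac]
    exact apexCos_angle_lt_apexCos_mul_angle (div_pos hr hr') ((div_lt_one hr').2 hrr') hLI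
  exact (strictAntiOn_cos.lt_iff_gt ⟨angle_nonneg _ _, angle_le_pi _ _⟩
    ⟨angle_nonneg _ _, angle_le_pi _ _⟩).1 hcos
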